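/- arXiv:1701.04162 — 2 statements merged into one kernel-verified Lean document; each statement's English description precedes it below -/
import Mathlib

section
/- Let n ≥ 2 and let w_0, ..., w_{n-1} be real arc weights on the directed cycle on n vertices with total weight w = Σ_i w_i nonzero. Let W be the weighted distance matrix (W_{ii} = 0, W_{ij} = Σ_{k=0}^{d-1} w_{(i+k) mod n} where d = (j-i) mod n for i ≠ j). Let L = (1/w)(I - P), where P is the cyclic permutation matrix with P_{i, (i+1) mod n} = 1, and let β be the vector with β_i = w_i / w. Then L W + I = β j^T. -/
/-!
Write `d i j` for the weighted distance from `i` to `j`. For `j ≠ i` the path from `i` to `j`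
starts with the arc `(i, i+1)`, so `d i j = w i + d (i+1) j`; and `d i i = 0` while the path from
`i + 1` back to `i` is the whole cycle minus that arc, so `d i i + w = w i + d (i+1) i`. Hence the rows of `(I - P) W`
are `(W_{ij} - W_{i+1,j})_j = (w_i - w δ_{ij})_j`, which after division by `w` is `β jᵀ - I`.
-/

open Matrix
open Fin.NatCast

section CycleDist

variable {n : ℕ} [NeZero n] {M : Type*} [AddCommMonoid M]

/-- `(j - i : Fin n)` is `(j - i) mod n`, the number of arcs on the directed path from `i` to `j`. -/
def cycleDist (w : Fin n → M) (i j : Fin n) : M :=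
  ∑ k ∈ Finset.range ((j - i : Fin n) : ℕ), w (i + (k : Fin n))

theorem sum_range_comp_add_natCast (w : Fin n → M) (i : Fin n) :
    ∑ k ∈ Finset.range n, w (i + (k : Fin n)) = ∑ k, w k := by
  rw [← Fin.sum_univ_eq_sum_range (fun k => w (i + (k : Fin n)))]
  simp only [Fin.cast_val_eq_self]
  exact Equiv.sum_comp (Equiv.addLeft i) w

theorem val_sub_add_ite (i j : Fin n) :
    ((j - i : Fin n) : ℕ) + (if i = j then n else 0) = ((j - (i + 1) : Fin n) : ℕ) + 1 := by
  obtain ⟨m, rfl⟩ := Nat.exists_eq_succ_of_ne_zero (NeZero.ne n)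
  rw [show j - (i + 1) = (j - i) - 1 by abel, Fin.coe_sub_one]
  by_cases hij : i = j
  · subst hij
    simp
  · have hji : j - i ≠ 0 := sub_ne_zero.mpr (Ne.symm hij)
    have : ((j - i : Fin (m + 1)) : ℕ) ≠ 0 := Fin.val_ne_zero_iff.mpr hji
    rw [if_neg hij, if_neg hji]
    omega

theorem cycleDist_add_ite (w : Fin n → M) (i j : Fin n) :
    cycleDist w i j + (if i = j then ∑ k, w k else 0) = w i + cycleDist w (i + 1) j := by
  have hshift (k : ℕ) : i + ((k + 1 : ℕ) : Fin n) = i + 1 + (k : Fin n) := by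
    push_cast; abel
  have hdist : cycleDist w i j + (if i = j then ∑ k, w k else 0) =
      ∑ k ∈ Finset.range (((j - i : Fin n) : ℕ) + (if i = j then n else 0)), w (i + (k : Fin n)) := by
    by_cases hij : i = j
    · subst hij
      simp [cycleDist, sum_range_comp_add_natCast]
    · simp [cycleDist, hij]
  rw [hdist, val_sub_add_ite, Finset.sum_range_succ', add_comm]
  simp only [cycleDist, hshift, Nat.cast_zero, add_zero]

end CycleDist

theorem of_ite_eq_one_mul {l m n R : Type*} [Fintype m] [DecidableEq m] [NonAssocSemiring R]
    (f : n → m) (A : Matrix m l R) :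
    (of fun i j => if j = f i then (1 : R) else 0) * A = A.submatrix f id := by
  ext i j
  simp [mul_apply]

theorem stmt_8_general {n : ℕ} [NeZero n] (w : Fin n → ℝ)
    (hw : (∑ i, w i) ≠ 0)
    (W : Matrix (Fin n) (Fin n) ℝ)
    (hW : W = Matrix.of fun i j => ∑ k ∈ Finset.range ((j - i : Fin n) : ℕ), w (i + (k : Fin n)))
    (P : Matrix (Fin n) (Fin n) ℝ)
    (hP : P = Matrix.of fun i j => if j = i + 1 then (1 : ℝ) else 0)
    (L : Matrix (Fin n) (Fin n) ℝ) (hL : L = (∑ i, w i)⁻¹ • (1 - P))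
    (β : Fin n → ℝ) (hβ : β = fun i => w i / (∑ i, w i)) :
    L * W + 1 = vecMulVec β (fun _ => 1) := by
  have hWdist : W = of (cycleDist w) := hW
  subst hWdist hP hL hβ
  ext i j
  have hrow := cycleDist_add_ite w i j
  simp only [smul_mul, sub_mul, one_mul, of_ite_eq_one_mul, Matrix.add_apply, Matrix.smul_apply,
    Matrix.sub_apply, submatrix_apply, of_apply, id, one_apply, vecMulVec_apply, mul_one, smul_eq_mul]
  field_simp
  split_ifs at hrow ⊢ <;> linear_combination hrow

theorem stmt_8 {n : ℕ} [NeZero n] (hn : 2 ≤ n) (w : Fin n → ℝ)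
    (hw : (∑ i, w i) ≠ 0)
    (W : Matrix (Fin n) (Fin n) ℝ)
    (hW : W = Matrix.of fun i j => ∑ k ∈ Finset.range ((j - i : Fin n) : ℕ), w (i + (k : Fin n)))
    (P : Matrix (Fin n) (Fin n) ℝ)
    (hP : P = Matrix.of fun i j => if j = i + 1 then (1 : ℝ) else 0)
    (L : Matrix (Fin n) (Fin n) ℝ) (hL : L = (∑ i, w i)⁻¹ • (1 - P))
    (β : Fin n → ℝ) (hβ : β = fun i => w i / (∑ i, w i)) :
    L * W + 1 = vecMulVec β (fun _ => 1) :=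
  stmt_8_general w hw W hW P hP L hL β hβ
end

section
/- Let n ≥ 2 and let w_0, ..., w_{n-1} be nonzero real arc weights on the directed cycle on n vertices such that w = Σ_i w_i ≠ 0 and w^{(2)} = Σ_{0 ≤ i < j ≤ n-1} w_i w_j ≠ 0. Let W be the weighted distance matrix. Then W is invertible and W^{-1} = -(1/w)(I - P) + (w / w^{(2)}) β α^T, where P is the cyclic permutation matrix, β_i = w_i/w, and α_i = w_{(i-1) mod n}/w. -/
/-!
Extending a path of the cycle by one arc at either end gives the recurrences
`W i (j + 1) = W i j + w j` and `W i j = w i + W (i + 1) j`, corrected by `s = ∑ wₖ` when the path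
closes up. The first says `W (I - P) = 𝟙 (w_{j-1})ⱼᵀ - s I`. The second shows that the row sums
`∑ₖ W i k wₖ` do not depend on `i`; in row `0` the sum is `∑_{m < k} w_m w_k = w⁽²⁾`, so
`W w = w⁽²⁾ 𝟙`. With these two identities, `W` times the claimed inverse collapses to `I`.
-/

open Matrix Finset

namespace Fin

variable {n : ℕ} [NeZero n]

theorem val_add_one_of_add_one_ne_zero {d : Fin n} (h : d + 1 ≠ 0) : (d + 1).val = d.val + 1 := by
  obtain ⟨m, rfl⟩ := Nat.exists_eq_add_one_of_ne_zero (NeZero.ne n)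
  rw [Fin.val_add_one, if_neg]
  rintro rfl
  simp at h

theorem val_add_one_of_add_one_eq_zero {d : Fin n} (h : d + 1 = 0) : d.val + 1 = n := by
  obtain ⟨m, rfl⟩ := Nat.exists_eq_add_one_of_ne_zero (NeZero.ne n)
  rw [eq_neg_of_add_eq_zero_left h, Fin.coe_neg_one]

theorem ofNat_succ (k : ℕ) : Fin.ofNat n (k + 1) = Fin.ofNat n k + 1 := by
  ext
  simp [Fin.val_add, Nat.add_mod]

theorem add_ofNat_succ (i : Fin n) (k : ℕ) :
    i + Fin.ofNat n (k + 1) = i + 1 + Fin.ofNat n k := by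
  rw [ofNat_succ]
  abel

theorem eq_of_apply_add_one_eq {α : Type*} {f : Fin n → α} (h : ∀ i, f (i + 1) = f i) (i : Fin n) :
    f i = f 0 := by
  suffices ∀ k, f (Fin.ofNat n k) = f 0 by simpa using this i
  intro k
  induction k with
  | zero => simp
  | succ k ih => rw [ofNat_succ, h, ih]

theorem sum_range_comp_add_ofNat {M : Type*} [AddCommMonoid M] (g : Fin n → M) (i : Fin n) :
    ∑ k ∈ range n, g (i + Fin.ofNat n k) = ∑ k, g k := by
  rw [← Fin.sum_univ_eq_sum_range (fun k => g (i + Fin.ofNat n k))]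
  simp only [Fin.ofNat_eq_cast, Fin.cast_val_eq_self]
  exact Fintype.sum_equiv (Equiv.addLeft i) _ _ fun _ => rfl

theorem sum_range_val_comp_ofNat {M : Type*} [AddCommMonoid M] (g : Fin n → M) (b : Fin n) :
    ∑ k ∈ range b, g (Fin.ofNat n k) = ∑ a ∈ Iio b, g a := by
  rw [← Nat.Iio_eq_range, ← Fin.map_valEmbedding_Iio, sum_map]
  simp

end Fin

section CommRing

variable {R : Type*} [CommRing R] {n : ℕ} [NeZero n]

def cycleDistMatrix (w : Fin n → R) : Matrix (Fin n) (Fin n) R :=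
  of fun i j => ∑ k ∈ range (j - i : Fin n).val, w (i + Fin.ofNat n k)

def cycleShift : Matrix (Fin n) (Fin n) R :=
  of fun i j => if j = i + 1 then 1 else 0

theorem mul_cycleShift_apply (A : Matrix (Fin n) (Fin n) R) (i j : Fin n) :
    (A * (cycleShift : Matrix (Fin n) (Fin n) R)) i j = A i (j - 1) := by
  rw [mul_apply, sum_eq_single (j - 1)]
  · simp [cycleShift]
  · intro k _ hk
    rw [cycleShift, of_apply, if_neg, mul_zero]
    rintro rfl
    simp at hk
  · simp

namespace cycleDistMatrix

variable (w : Fin n → R)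

theorem apply_self (i : Fin n) : cycleDistMatrix w i i = 0 := by
  simp [cycleDistMatrix]

theorem sum_range_val_sub_succ (i j : Fin n) :
    ∑ k ∈ range ((j - i).val + 1), w (i + Fin.ofNat n k) = cycleDistMatrix w i j + w j := by
  rw [sum_range_succ, Fin.ofNat_eq_cast, Fin.cast_val_eq_self, add_sub_cancel]
  rfl

theorem apply_add_one_right (i j : Fin n) :
    cycleDistMatrix w i (j + 1) + (if i = j + 1 then ∑ k, w k else 0)
      = cycleDistMatrix w i j + w j := by
  rw [← sum_range_val_sub_succ]
  split_ifs with h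
  · subst h
    rw [apply_self, zero_add, Fin.val_add_one_of_add_one_eq_zero (by abel),
      Fin.sum_range_comp_add_ofNat]
  · rw [add_zero, cycleDistMatrix, of_apply, add_sub_right_comm,
      Fin.val_add_one_of_add_one_ne_zero (by rwa [← add_sub_right_comm, sub_ne_zero, ne_comm])]

theorem apply_add_one_left (i j : Fin n) :
    cycleDistMatrix w i j + (if i = j then ∑ k, w k else 0)
      = w i + cycleDistMatrix w (i + 1) j := by
  have hd : j - i = j - (i + 1) + 1 := by abel
  have hpath : ∑ k ∈ range ((j - (i + 1)).val + 1), w (i + Fin.ofNat n k)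
      = w i + cycleDistMatrix w (i + 1) j := by
    simp only [sum_range_succ', Fin.add_ofNat_succ, add_comm _ (w _)]
    simp [cycleDistMatrix]
  split_ifs with h
  · subst h
    rw [apply_self, zero_add, ← hpath, Fin.val_add_one_of_add_one_eq_zero (by abel),
      Fin.sum_range_comp_add_ofNat]
  · rw [add_zero, ← hpath, cycleDistMatrix, of_apply, hd,
      Fin.val_add_one_of_add_one_ne_zero (by rwa [← hd, sub_ne_zero, ne_comm])]

theorem mul_one_sub_cycleShift :
    cycleDistMatrix w * (1 - cycleShift) = vecMulVec 1 (fun j => w (j - 1)) - (∑ k, w k) • 1 := by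
  ext i j
  have h := apply_add_one_right w i (j - 1)
  rw [sub_add_cancel] at h
  simp only [Matrix.mul_sub, Matrix.sub_apply, mul_cycleShift_apply, vecMulVec_apply,
    Pi.one_apply, one_mul, Matrix.smul_apply, one_apply, smul_eq_mul, mul_ite, mul_one, mul_zero]
  linear_combination h

theorem mulVec_self_apply_add_one (i : Fin n) :
    (cycleDistMatrix w *ᵥ w) (i + 1) = (cycleDistMatrix w *ᵥ w) i := by
  have h : ∑ k, (cycleDistMatrix w i k + if i = k then ∑ k, w k else 0) * w k
      = ∑ k, (w i + cycleDistMatrix w (i + 1) k) * w k :=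
    sum_congr rfl fun k _ => by rw [apply_add_one_left]
  simp only [add_mul, sum_add_distrib, ite_mul, zero_mul, sum_ite_eq, mem_univ, if_true,
    ← mul_sum] at h
  simp only [mulVec, dotProduct]
  linear_combination -h

theorem mulVec_self_apply_zero :
    (cycleDistMatrix w *ᵥ w) 0 = ∑ i, ∑ j ∈ Ioi i, w i * w j := by
  simp only [mulVec, dotProduct, cycleDistMatrix, of_apply, sub_zero, zero_add,
    Fin.sum_range_val_comp_ofNat, sum_mul]
  exact sum_comm' fun _ _ => by simp [and_comm]

theorem mulVec_self : cycleDistMatrix w *ᵥ w = fun _ => ∑ i, ∑ j ∈ Ioi i, w i * w j := by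
  funext i
  rw [Fin.eq_of_apply_add_one_eq (mulVec_self_apply_add_one w) i, mulVec_self_apply_zero]

end cycleDistMatrix

end CommRing

section Field

variable {K : Type*} [Field K] {n : ℕ} [NeZero n]

def cycleDistInv (w : Fin n → K) : Matrix (Fin n) (Fin n) K :=
  -((∑ i, w i)⁻¹ • (1 - cycleShift)) +
    ((∑ i, w i) / ∑ i, ∑ j ∈ Ioi i, w i * w j) •
      vecMulVec (fun i => w i / ∑ i, w i) (fun i => w (i - 1) / ∑ i, w i)

theorem mul_cycleDistInv (w : Fin n → K) (hs : ∑ i, w i ≠ 0)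
    (ht : ∑ i, ∑ j ∈ Ioi i, w i * w j ≠ 0) : cycleDistMatrix w * cycleDistInv w = 1 := by
  have hβ : (fun i => w i / ∑ i, w i) = (∑ i, w i)⁻¹ • w := by
    funext i
    simp [div_eq_inv_mul]
  rw [cycleDistInv, Matrix.mul_add, Matrix.mul_neg, Matrix.mul_smul,
    cycleDistMatrix.mul_one_sub_cycleShift, Matrix.mul_smul, mul_vecMulVec, hβ, mulVec_smul,
    cycleDistMatrix.mulVec_self]
  ext i j
  simp only [Matrix.add_apply, Matrix.neg_apply, Matrix.smul_apply, Matrix.sub_apply,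
    vecMulVec_apply, Pi.smul_apply, Pi.one_apply, one_apply, smul_eq_mul]
  field_simp
  ring

end Field

theorem stmt_12_general {n : ℕ} [NeZero n] (w : Fin n → ℝ)
    (hw : (∑ i, w i) ≠ 0)
    (hw2 : (∑ i, ∑ j ∈ Finset.Ioi i, w i * w j) ≠ 0)
    (W : Matrix (Fin n) (Fin n) ℝ)
    (hW : W = Matrix.of fun i j => ∑ k ∈ Finset.range ((j - i : Fin n) : ℕ), w (i + (Fin.ofNat n k)))
    (P : Matrix (Fin n) (Fin n) ℝ)
    (hP : P = Matrix.of fun i j => if j = i + 1 then (1 : ℝ) else 0)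
    (α β : Fin n → ℝ)
    (hα : α = fun i => w (i - 1) / (∑ i, w i))
    (hβ : β = fun i => w i / (∑ i, w i)) :
    IsUnit W.det ∧
      W⁻¹ = -((∑ i, w i)⁻¹ • (1 - P)) +
        ((∑ i, w i) / (∑ i, ∑ j ∈ Finset.Ioi i, w i * w j)) • vecMulVec β α := by
  subst hW hP hα hβ
  have h := mul_cycleDistInv w hw hw2
  exact ⟨isUnit_det_of_right_inverse h, inv_eq_right_inv h⟩

theorem stmt_12 {n : ℕ} [NeZero n] (hn : 2 ≤ n) (w : Fin n → ℝ)
    (hw0 : ∀ i, w i ≠ 0)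
    (hw : (∑ i, w i) ≠ 0)
    (hw2 : (∑ i, ∑ j ∈ Finset.Ioi i, w i * w j) ≠ 0)
    (W : Matrix (Fin n) (Fin n) ℝ)
    (hW : W = Matrix.of fun i j => ∑ k ∈ Finset.range ((j - i : Fin n) : ℕ), w (i + (Fin.ofNat n k)))
    (P : Matrix (Fin n) (Fin n) ℝ)
    (hP : P = Matrix.of fun i j => if j = i + 1 then (1 : ℝ) else 0)
    (α β : Fin n → ℝ)
    (hα : α = fun i => w (i - 1) / (∑ i, w i))
    (hβ : β = fun i => w i / (∑ i, w i)) :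
    IsUnit W.det ∧
      W⁻¹ = -((∑ i, w i)⁻¹ • (1 - P)) +
        ((∑ i, w i) / (∑ i, ∑ j ∈ Finset.Ioi i, w i * w j)) • vecMulVec β α :=
  stmt_12_general w hw hw2 W hW P hP α β hα hβ
end
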